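/- Let V(x,y) = a(x)b(y) where a ∈ C¹(ℝ) is bounded with a(x) > 0 for all x ∈ ℝ, and b ∈ C²(ℝ) is 1-periodic with b ≤ 0 and max b = 0. Fix ε ∈ (0,1), x₀ ∈ ℝ, t₀ > 0, and set ȳ₀ = min{ y ∈ [x₀/ε, x₀/ε + 1) : b(y) = 0 } and y̲₀ = max{ y ∈ (x₀/ε − 1, x₀/ε] : b(y) = 0 } (both exist since b is 1-periodic and attains its maximum 0). Let η : [0, t₀/ε] → ℝ be differentiable with η(0) = x₀/ε such that for some constant r ≤ 0 one has ½|η′(s)|² + V(εη(s), η(s)) = r for all s ∈ [0, t₀/ε]. Then y̲₀ ≤ η(s) ≤ ȳ₀ for all s ∈ [0, t₀/ε]; in particular every trajectory of nonpositive energy stays within distance 1 of its starting point. -/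

import Mathlib

/-!
Since `b ≤ 0` vanishes at `y₀`, it has a critical point there, and a bound `C` on `|b''|`
(available by periodicity) gives `-b y ≤ C / 2 * (y - y₀) ^ 2`. With nonpositive energy,
`η'² / 2 ≤ -a b ≤ M (-b)`, so `|η'| ≤ K |η - y₀|` along the trajectory. By Grönwall's inequality
a trajectory obeying this bound that reaches `y₀` stays at `y₀`, so it can never cross a zero of
`b`; this traps `η` between `ylow` and `ybar`.
-/

open Set Function

theorem Function.Periodic.deriv {𝕜 F : Type*} [NontriviallyNormedField 𝕜]
    [NormedAddCommGroup F] [NormedSpace 𝕜 F] {f : 𝕜 → F} {c : 𝕜} (hf : Periodic f c) :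
    Periodic (deriv f) c := by
  intro x
  rw [← deriv_comp_add_const, hf.funext]

-- `f + C / 2 * (· - y₀) ^ 2` is convex with a critical point at `y₀`, hence minimal there.
theorem sub_le_of_deriv_eq_zero_of_neg_le_deriv2 {f : ℝ → ℝ} {C y₀ : ℝ}
    (hf : Differentiable ℝ f) (hf' : Differentiable ℝ (deriv f))
    (hC : ∀ y, -C ≤ deriv^[2] f y) (hy₀ : deriv f y₀ = 0) (y : ℝ) :
    f y₀ - f y ≤ C / 2 * (y - y₀) ^ 2 := by
  set g : ℝ → ℝ := fun y => f y + C / 2 * (y - y₀) ^ 2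
  have hg : ∀ y, HasDerivAt g (deriv f y + C * (y - y₀)) y := fun y => by
    refine ((hf y).hasDerivAt.add
      ((((hasDerivAt_id' y).sub_const y₀).pow 2).const_mul (C / 2))).congr_deriv ?_
    push_cast
    ring
  have hg' : deriv g = fun y => deriv f y + C * (y - y₀) := funext fun y => (hg y).deriv
  have hconvex : ConvexOn ℝ univ g := by
    refine convexOn_univ_of_deriv2_nonneg (fun y => (hg y).differentiableAt) ?_ fun y => ?_
    · rw [hg']
      fun_prop
    · have h2 : HasDerivAt (deriv g) (deriv (deriv f) y + C) y := by
        rw [hg']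
        exact ((hf' y).hasDerivAt.add
          (((hasDerivAt_id' y).sub_const y₀).const_mul C)).congr_deriv (by ring)
      show 0 ≤ deriv (deriv g) y
      rw [h2.deriv]
      exact neg_le_iff_add_nonneg.1 (hC y)
  have hmin : IsMinOn g univ y₀ := by
    refine hconvex.isMinOn_of_rightDeriv_eq_zero (by simp) ?_
    rw [(hg y₀).hasDerivWithinAt.derivWithin (uniqueDiffWithinAt_Ioi y₀), hy₀]
    ring
  have hgy : f y₀ ≤ f y + C / 2 * (y - y₀) ^ 2 := by simpa [g] using hmin (mem_univ y)
  linarith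

theorem abs_le_sqrt_mul_abs_of_energy_nonpos {v A B r M Q d : ℝ} (hE : v ^ 2 / 2 + A * B = r)
    (hr : r ≤ 0) (hA : A ≤ M) (hB : B ≤ 0) (hM : 0 ≤ M) (hQ : -B ≤ Q * d ^ 2) :
    |v| ≤ √(2 * M * Q) * |d| := by
  have hv : v ^ 2 ≤ 2 * M * Q * d ^ 2 := by
    nlinarith [mul_le_mul_of_nonneg_right hA (neg_nonneg.2 hB), mul_le_mul_of_nonneg_left hQ hM]
  calc |v| ≤ √(2 * M * Q * d ^ 2) := Real.abs_le_sqrt hv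
    _ = √(2 * M * Q) * |d| := by rw [Real.sqrt_mul' _ (sq_nonneg d), Real.sqrt_sq_eq_abs]

section Confinement

variable {f f' : ℝ → ℝ} {a b K c : ℝ}

theorem le_of_abs_deriv_le_mul_abs_sub (hf : ContinuousOn f (Icc a b))
    (hf' : ∀ x ∈ Ico a b, HasDerivWithinAt f (f' x) (Ici x) x) (ha : f a ≤ c)
    (bound : ∀ x ∈ Ico a b, |f' x| ≤ K * |f x - c|) : ∀ x ∈ Icc a b, f x ≤ c := by
  intro x hx
  by_contra! hlt
  obtain ⟨t, ht, hft⟩ :=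
    intermediate_value_Icc hx.1 (hf.mono (Icc_subset_Icc_right hx.2)) ⟨ha, hlt.le⟩
  have hstuck := eq_zero_of_abs_deriv_le_mul_abs_self_of_eq_zero_right (f := fun s => f s - c)
    ((hf.mono (Icc_subset_Icc ht.1 hx.2)).sub continuousOn_const)
    (fun s hs => (hf' s (Ico_subset_Ico ht.1 hx.2 hs)).sub_const c) (sub_eq_zero.2 hft)
    (fun s hs => bound s (Ico_subset_Ico ht.1 hx.2 hs)) x ⟨ht.2, le_rfl⟩
  linarith [sub_eq_zero.1 hstuck]

theorem ge_of_abs_deriv_le_mul_abs_sub (hf : ContinuousOn f (Icc a b))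
    (hf' : ∀ x ∈ Ico a b, HasDerivWithinAt f (f' x) (Ici x) x) (ha : c ≤ f a)
    (bound : ∀ x ∈ Ico a b, |f' x| ≤ K * |f x - c|) : ∀ x ∈ Icc a b, c ≤ f x := by
  intro x hx
  refine neg_le_neg_iff.1 (le_of_abs_deriv_le_mul_abs_sub (f := fun s => -f s)
    (f' := fun s => -f' s) (K := K) hf.neg (fun s hs => (hf' s hs).neg) (neg_le_neg ha)
    (fun s hs => ?_) x hx)
  rw [abs_neg, neg_sub_neg, abs_sub_comm]
  exact bound s hs

end Confinement

theorem nonpositive_energy_confinement_general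
    (a b : ℝ → ℝ)
    (haBd : ∃ M : ℝ, ∀ x, |a x| ≤ M)
    (hb : ContDiff ℝ 2 b) (hbPer : Function.Periodic b 1)
    (hbNonpos : ∀ y, b y ≤ 0)
    (ε x₀ t₀ : ℝ)
    (ybar : ℝ) (hybar : ybar ∈ Set.Ico (x₀ / ε) (x₀ / ε + 1))
    (hybar0 : b ybar = 0)
    (ylow : ℝ) (hylow : ylow ∈ Set.Ioc (x₀ / ε - 1) (x₀ / ε))
    (hylow0 : b ylow = 0)
    (η η' : ℝ → ℝ)
    (hηd : ∀ s ∈ Set.Icc (0 : ℝ) (t₀ / ε), HasDerivAt η (η' s) s)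
    (hη0 : η 0 = x₀ / ε)
    (r : ℝ) (hr : r ≤ 0)
    (hen : ∀ s ∈ Set.Icc (0 : ℝ) (t₀ / ε),
      (η' s) ^ 2 / 2 + a (ε * η s) * b (η s) = r) :
    ∀ s ∈ Set.Icc (0 : ℝ) (t₀ / ε), ylow ≤ η s ∧ η s ≤ ybar := by
  obtain ⟨M, hM⟩ := haBd
  have hb' : Differentiable ℝ (deriv b) := (hb.iterate_deriv' 1 1).differentiable one_ne_zero
  obtain ⟨C, hC⟩ : ∃ C, ∀ y, |deriv^[2] b y| ≤ C := by
    simpa [isBounded_iff_forall_norm_le] using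
      (hbPer.deriv.deriv.isBounded_of_continuous one_ne_zero (hb.iterate_deriv' 0 2).continuous)
  have hvel : ∀ y₀, b y₀ = 0 →
      ∀ s ∈ Ico 0 (t₀ / ε), |η' s| ≤ √(2 * M * (C / 2)) * |η s - y₀| := by
    intro y₀ hy₀ s hs
    have hcrit : deriv b y₀ = 0 :=
      IsLocalMax.deriv_eq_zero (Filter.Eventually.of_forall fun y => hy₀ ▸ hbNonpos y)
    refine abs_le_sqrt_mul_abs_of_energy_nonpos (hen s (Ico_subset_Icc_self hs)) hr
      ((le_abs_self _).trans (hM _)) (hbNonpos _) ((abs_nonneg _).trans (hM 0)) ?_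
    simpa [hy₀] using sub_le_of_deriv_eq_zero_of_neg_le_deriv2 (hb.differentiable (by norm_num))
      hb' (fun y => (abs_le.1 (hC y)).1) hcrit (η s)
  have hcont : ContinuousOn η (Icc 0 (t₀ / ε)) := fun s hs =>
    (hηd s hs).continuousAt.continuousWithinAt
  have hderiv : ∀ s ∈ Ico 0 (t₀ / ε), HasDerivWithinAt η (η' s) (Ici s) s := fun s hs =>
    (hηd s (Ico_subset_Icc_self hs)).hasDerivWithinAt
  exact fun s hs =>
    ⟨ge_of_abs_deriv_le_mul_abs_sub hcont hderiv (hη0 ▸ hylow.2) (hvel ylow hylow0) s hs,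
      le_of_abs_deriv_le_mul_abs_sub hcont hderiv (hη0 ▸ hybar.1) (hvel ybar hybar0) s hs⟩

/-- Every Euler–Lagrange trajectory of nonpositive energy stays between the
nearest zeros of `b` on either side of its starting point (hence within
distance 1 of it). -/
theorem nonpositive_energy_confinement
    (a b : ℝ → ℝ)
    (ha : ContDiff ℝ 1 a) (haBd : ∃ M : ℝ, ∀ x, |a x| ≤ M)
    (haPos : ∀ x, 0 < a x)
    (hb : ContDiff ℝ 2 b) (hbPer : Function.Periodic b 1)
    (hbNonpos : ∀ y, b y ≤ 0) (hbMax : ∃ y₀, b y₀ = 0)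
    (ε x₀ t₀ : ℝ) (hε : ε ∈ Set.Ioo (0 : ℝ) 1) (ht₀ : 0 < t₀)
    (ybar : ℝ) (hybar : ybar ∈ Set.Ico (x₀ / ε) (x₀ / ε + 1))
    (hybar0 : b ybar = 0)
    (hybarmin : ∀ y ∈ Set.Ico (x₀ / ε) (x₀ / ε + 1), b y = 0 → ybar ≤ y)
    (ylow : ℝ) (hylow : ylow ∈ Set.Ioc (x₀ / ε - 1) (x₀ / ε))
    (hylow0 : b ylow = 0)
    (hylowmax : ∀ y ∈ Set.Ioc (x₀ / ε - 1) (x₀ / ε), b y = 0 → y ≤ ylow)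
    (η η' : ℝ → ℝ)
    (hηd : ∀ s ∈ Set.Icc (0 : ℝ) (t₀ / ε), HasDerivAt η (η' s) s)
    (hη0 : η 0 = x₀ / ε)
    (r : ℝ) (hr : r ≤ 0)
    (hen : ∀ s ∈ Set.Icc (0 : ℝ) (t₀ / ε),
      (η' s) ^ 2 / 2 + a (ε * η s) * b (η s) = r) :
    ∀ s ∈ Set.Icc (0 : ℝ) (t₀ / ε), ylow ≤ η s ∧ η s ≤ ybar :=
  nonpositive_energy_confinement_general a b haBd hb hbPer hbNonpos ε x₀ t₀ ybar hybar hybar0 ylow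
    hylow hylow0 η η' hηd hη0 r hr hen
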